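/- Let K ≥ 2, let γ_1, …, γ_K > 0 be pairwise distinct, and let ω_1, …, ω_K ∈ ℝ be such that there exist at least two indices j ≠ j' with ω_j ≠ 0 and ω_{j'} ≠ 0. Then there exist no functions f, g : ℝ → ℝ such that Σ_{k=1}^K ω_k e^{−γ_k(t−u)} = f(t)·g(u) for all real numbers u, t with 0 ≤ u ≤ t ≤ 1. -/

import Mathlib

/-!
Write `F(x) = Σ_k ω_k e^{-γ_k x}`, so the kernel is `F(t - u)`. A factorization
`F(t - u) = f(t) g(u)` on the triangle forces `F(a) F(c - a) = F(c) F(0)` there, and since `F`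
is real analytic this identity holds for all `a, c`; at `c = 0` it reads `F(x) F(-x) = F(0)²`.
Let `m`, `M` be the indices of the smallest and largest speed among the nonzero weights. As
`x → ∞`, `e^{γ_m x} F(x) → ω_m` and `e^{-γ_M x} F(-x) → ω_M`, so
`e^{(γ_m - γ_M) x} F(0)² → ω_m ω_M ≠ 0`, which is absurd since `γ_m < γ_M`.
-/

open Real Set Filter Topology

theorem Finset.exists_strict_argmin_argmax {ι β : Type*} [LinearOrder β] {γ : ι → β}
    (hγ : Function.Injective γ) {s : Finset ι} (hs : 1 < s.card) :
    ∃ m ∈ s, ∃ M ∈ s, γ m < γ M ∧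
      (∀ k ∈ s, k ≠ m → γ m < γ k) ∧ (∀ k ∈ s, k ≠ M → γ k < γ M) := by
  have hne : s.Nonempty := Finset.card_pos.1 (by omega)
  obtain ⟨m, hm, hmin⟩ := s.exists_min_image γ hne
  obtain ⟨M, hM, hmax⟩ := s.exists_max_image γ hne
  have hm_strict : ∀ k ∈ s, k ≠ m → γ m < γ k := fun k hk hkm =>
    (hmin k hk).lt_of_ne (hγ.ne hkm.symm)
  obtain ⟨k, hk, hkm⟩ := (Finset.one_lt_card_iff_nontrivial.1 hs).exists_ne m
  exact ⟨m, hm, M, hM, (hm_strict k hk hkm).trans_le (hmax k hk), hm_strict,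
    fun k hk hkM => (hmax k hk).lt_of_ne (hγ.ne hkM)⟩

theorem AnalyticOnNhd.eq_of_eqOn_Ioo {f g : ℝ → ℝ} (hf : AnalyticOnNhd ℝ f univ)
    (hg : AnalyticOnNhd ℝ g univ) {a b : ℝ} (hab : a < b) (hfg : EqOn f g (Ioo a b)) :
    f = g :=
  hf.eq_of_eventuallyEq hg (z₀ := (a + b) / 2) <|
    eventually_of_mem (Ioo_mem_nhds (by linarith) (by linarith)) hfg

theorem mul_neg_eq_sq_of_factorization {F f g : ℝ → ℝ} (hF : AnalyticOnNhd ℝ F univ)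
    (hfac : ∀ u t, 0 ≤ u → u ≤ t → t ≤ 1 → F (t - u) = f t * g u) (x : ℝ) :
    F x * F (-x) = F 0 ^ 2 := by
  have hF' : ∀ y, AnalyticAt ℝ F y := fun y => hF y trivial
  have on_triangle : ∀ a c, 0 ≤ a → a ≤ c → c ≤ 1 → F a * F (c - a) = F c * F 0 := by
    intro a c ha hac hc
    have h₁ := hfac (c - a) c (by linarith) (by linarith) hc
    have h₂ := hfac 0 (c - a) le_rfl (by linarith) (by linarith)
    have h₃ := hfac 0 c le_rfl (by linarith) hc
    have h₄ := hfac (c - a) (c - a) (by linarith) le_rfl (by linarith)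
    simp only [sub_sub_cancel, sub_zero, sub_self] at h₁ h₂ h₃ h₄
    rw [h₁, h₂, h₃, h₄]
    ring
  have in_a : ∀ c ∈ Ioo (0 : ℝ) 1, ∀ a, F a * F (c - a) = F c * F 0 := fun c hc =>
    congrFun <| AnalyticOnNhd.eq_of_eqOn_Ioo (fun y _ => by fun_prop) (fun y _ => by fun_prop)
      hc.1 fun a ha => on_triangle a c ha.1.le ha.2.le hc.2.le
  have in_c : ∀ c, F x * F (c - x) = F c * F 0 :=
    congrFun <| AnalyticOnNhd.eq_of_eqOn_Ioo (fun y _ => by fun_prop) (fun y _ => by fun_prop)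
      zero_lt_one fun c hc => in_a c hc x
  simpa [sq] using in_c 0

section ExpSum

variable {ι : Type*} [Fintype ι]

noncomputable def expSum (ω γ : ι → ℝ) (x : ℝ) : ℝ :=
  ∑ k, ω k * exp (-γ k * x)

theorem analyticOnNhd_expSum (ω γ : ι → ℝ) : AnalyticOnNhd ℝ (expSum ω γ) univ := by
  intro x _
  unfold expSum
  fun_prop

theorem expSum_neg_rate (ω γ : ι → ℝ) (x : ℝ) : expSum ω (-γ) x = expSum ω γ (-x) := by
  simp only [expSum, Pi.neg_apply, neg_mul, mul_neg]

theorem tendsto_exp_mul_atTop_nhds_zero {r : ℝ} (hr : r < 0) :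
    Tendsto (fun x => exp (r * x)) atTop (𝓝 0) :=
  tendsto_exp_comp_nhds_zero.2 (tendsto_id.const_mul_atTop_of_neg hr)

theorem tendsto_exp_mul_expSum_atTop (ω γ : ι → ℝ) {i : ι}
    (hi : ∀ k ≠ i, ω k ≠ 0 → γ i < γ k) :
    Tendsto (fun x => exp (γ i * x) * expSum ω γ x) atTop (𝓝 (ω i)) := by
  classical
  have expand : ∀ x, exp (γ i * x) * expSum ω γ x = ∑ k, ω k * exp ((γ i - γ k) * x) := by
    intro x
    simp only [expSum, Finset.mul_sum]
    refine Finset.sum_congr rfl fun k _ => ?_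
    rw [mul_left_comm, ← exp_add]
    ring_nf
  have hωi : ω i = ∑ k, if k = i then ω k else 0 := by simp
  simp only [expand]
  rw [hωi]
  refine tendsto_finsetSum _ fun k _ => ?_
  by_cases hki : k = i
  · subst hki
    simp
  by_cases hωk : ω k = 0
  · simp [hωk]
  simpa [hki] using
    (tendsto_exp_mul_atTop_nhds_zero (sub_neg.2 (hi k hki hωk))).const_mul (ω k)

end ExpSum

theorem stmt_5_general (K : ℕ) (γ ω : Fin K → ℝ)
    (hdist : Function.Injective γ)
    (hω : ∃ j j' : Fin K, j ≠ j' ∧ ω j ≠ 0 ∧ ω j' ≠ 0) :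
    ¬ ∃ f g : ℝ → ℝ, ∀ u t : ℝ, 0 ≤ u → u ≤ t → t ≤ 1 →
      ∑ k, ω k * Real.exp (-γ k * (t - u)) = f t * g u := by
  rintro ⟨f, g, hfg⟩
  obtain ⟨j, j', hjj', hj, hj'⟩ := hω
  obtain ⟨m, hm, M, hM, hmM, hm_min, hM_max⟩ :=
    Finset.exists_strict_argmin_argmax hdist (s := Finset.univ.filter (ω · ≠ 0))
      (Finset.one_lt_card.2 ⟨j, by simpa, j', by simpa, hjj'⟩)
  have hsymm := mul_neg_eq_sq_of_factorization (analyticOnNhd_expSum ω γ) hfg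
  have h_top := tendsto_exp_mul_expSum_atTop ω γ fun k hk hωk => hm_min k (by simpa) hk
  have h_bot := tendsto_exp_mul_expSum_atTop ω (-γ) fun k hk hωk =>
    neg_lt_neg (hM_max k (by simpa) hk)
  have h_prod : Tendsto (fun x => exp ((γ m - γ M) * x) * expSum ω γ 0 ^ 2) atTop
      (𝓝 (ω m * ω M)) := by
    refine (h_top.mul h_bot).congr fun x => ?_
    rw [expSum_neg_rate, ← hsymm x, sub_mul, sub_eq_add_neg, exp_add, Pi.neg_apply, neg_mul]
    ring
  have h_zero := (tendsto_exp_mul_atTop_nhds_zero (sub_neg.2 hmM)).mul_const (expSum ω γ 0 ^ 2)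
  rw [zero_mul] at h_zero
  exact mul_ne_zero (by simpa using hm) (by simpa using hM) (tendsto_nhds_unique h_prod h_zero)

/-- Non-factorizability of the MA-fBM kernel: if at least two weights are nonzero and
the mean-reversion speeds are pairwise distinct, then the kernel
`κ(t,u) = Σ_k ω_k e^{-γ_k (t-u)}` does not factor as `f(t)·g(u)` on `0 ≤ u ≤ t ≤ 1`. -/
theorem stmt_5 (K : ℕ) (hK : 2 ≤ K) (γ ω : Fin K → ℝ) (hγ : ∀ k, 0 < γ k)
    (hdist : Function.Injective γ)
    (hω : ∃ j j' : Fin K, j ≠ j' ∧ ω j ≠ 0 ∧ ω j' ≠ 0) :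
    ¬ ∃ f g : ℝ → ℝ, ∀ u t : ℝ, 0 ≤ u → u ≤ t → t ≤ 1 →
      ∑ k, ω k * Real.exp (-γ k * (t - u)) = f t * g u :=
  stmt_5_general K γ ω hdist hω
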